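/- arXiv:1408.1382 — 2 statements merged into one kernel-verified Lean document; each statement's English description precedes it below -/
import Mathlib

section
/- Let α, δ : [0,T] → ℝ be continuous nonnegative functions, z ≥ 0, and let c : [0,T] → ℝ be a continuous function satisfying c(t) ≥ F(c)(t) for all t ∈ [0,T], where F(c)(t) = z·exp(−∫₀ᵗ α(v)dv) + ∫₀ᵗ δ(s)·exp(−∫ₛᵗ α(v)dv)·c(s) ds. Then c(t) ≥ z·exp(∫₀ᵗ (δ(v)−α(v))dv) for all t ∈ [0,T]. -/
open intervalIntegral

/-- Core version: all functions continuous on all of ℝ. -/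
theorem stmt0_core (T : ℝ) (hT : 0 ≤ T) (α δ c : ℝ → ℝ)
    (hα : Continuous α) (hδ : Continuous δ) (hc : Continuous c)
    (hδnonneg : ∀ t ∈ Set.Icc (0:ℝ) T, 0 ≤ δ t)
    (z : ℝ) (hz : 0 ≤ z)
    (hhabit : ∀ t ∈ Set.Icc (0:ℝ) T,
      c t ≥ z * Real.exp (-(∫ v in (0:ℝ)..t, α v)) +
        ∫ s in (0:ℝ)..t, δ s * Real.exp (-(∫ v in s..t, α v)) * c s) :
    ∀ t ∈ Set.Icc (0:ℝ) T,
      c t ≥ z * Real.exp (∫ v in (0:ℝ)..t, δ v - α v) := by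
  set A : ℝ → ℝ := fun t => ∫ v in (0:ℝ)..t, α v with hAdef
  set D : ℝ → ℝ := fun t => ∫ v in (0:ℝ)..t, δ v with hDdef
  have hA' : ∀ t, HasDerivAt A (α t) t := fun t =>
    integral_hasDerivAt_right (hα.intervalIntegrable 0 t)
      hα.aestronglyMeasurable.stronglyMeasurableAtFilter hα.continuousAt
  have hD' : ∀ t, HasDerivAt D (δ t) t := fun t =>
    integral_hasDerivAt_right (hδ.intervalIntegrable 0 t)
      hδ.aestronglyMeasurable.stronglyMeasurableAtFilter hδ.continuousAt
  have hAcont : Continuous A := by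
    apply continuous_iff_continuousAt.2
    exact fun t => (hA' t).continuousAt
  have hAst : ∀ s t : ℝ, (∫ v in s..t, α v) = A t - A s := by
    intro s t
    rw [hAdef]
    rw [← intervalIntegral.integral_interval_sub_left (hα.intervalIntegrable 0 t)
      (hα.intervalIntegrable 0 s)]
  -- the auxiliary function g
  have hicont : Continuous (fun s => δ s * Real.exp (A s) * c s) :=
    (hδ.mul (Real.continuous_exp.comp hAcont)).mul hc
  set g : ℝ → ℝ := fun t => z + ∫ s in (0:ℝ)..t, δ s * Real.exp (A s) * c s with hgdef
  have hg' : ∀ t, HasDerivAt g (δ t * Real.exp (A t) * c t) t := by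
    intro t
    exact (integral_hasDerivAt_right (hicont.intervalIntegrable 0 t)
      hicont.aestronglyMeasurable.stronglyMeasurableAtFilter hicont.continuousAt).const_add z
  have hgcont : Continuous g := continuous_iff_continuousAt.2 fun t => (hg' t).continuousAt
  -- rewrite the habit inequality
  have habit' : ∀ t ∈ Set.Icc (0:ℝ) T, Real.exp (-(A t)) * g t ≤ c t := by
    intro t ht
    have h1 := hhabit t ht
    have key : ∀ s : ℝ, δ s * Real.exp (-(∫ v in s..t, α v)) * c s
        = Real.exp (-(A t)) * (δ s * Real.exp (A s) * c s) := by
      intro s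
      rw [hAst s t, neg_sub, Real.exp_sub, Real.exp_neg]
      ring
    have h2 : (∫ s in (0:ℝ)..t, δ s * Real.exp (-(∫ v in s..t, α v)) * c s)
        = Real.exp (-(A t)) * ∫ s in (0:ℝ)..t, δ s * Real.exp (A s) * c s := by
      simp_rw [key]
      exact intervalIntegral.integral_const_mul _ _
    rw [h2] at h1
    have : z * Real.exp (-(A t)) + Real.exp (-(A t)) * ∫ s in (0:ℝ)..t,
        δ s * Real.exp (A s) * c s = Real.exp (-(A t)) * g t := by
      rw [hgdef]; ring
    rw [this] at h1
    exact h1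
  -- h := exp(-D) * g is monotone on Icc 0 T
  set h : ℝ → ℝ := fun t => Real.exp (-(D t)) * g t with hhdef
  have hh' : ∀ t, HasDerivAt h
      (Real.exp (-(D t)) * (-(δ t)) * g t + Real.exp (-(D t)) * (δ t * Real.exp (A t) * c t)) t :=
    fun t => (((hD' t).neg.exp).mul (hg' t))
  have hdiff : Differentiable ℝ h := fun t => (hh' t).differentiableAt
  have hmono : MonotoneOn h (Set.Icc 0 T) := by
    apply monotoneOn_of_deriv_nonneg (convex_Icc 0 T) hdiff.continuous.continuousOn
      hdiff.differentiableOn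
    intro x hx
    rw [interior_Icc] at hx
    have hx' : x ∈ Set.Icc (0:ℝ) T := Set.mem_Icc_of_Ioo hx
    rw [(hh' x).deriv]
    have hcge : Real.exp (-(A x)) * g x ≤ c x := habit' x hx'
    have hge : g x ≤ Real.exp (A x) * c x := by
      have := mul_le_mul_of_nonneg_left hcge (le_of_lt (Real.exp_pos (A x)))
      rwa [← mul_assoc, ← Real.exp_add, add_neg_cancel, Real.exp_zero, one_mul] at this
    have hδx := hδnonneg x hx'
    nlinarith [Real.exp_pos (-(D x)), mul_le_mul_of_nonneg_left hge hδx]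
  -- conclude
  intro t ht
  have h0 : h 0 = z := by
    simp [hhdef, hgdef, hDdef]
  have hh0t : h 0 ≤ h t := hmono (Set.left_mem_Icc.2 hT) ht ht.1
  rw [h0] at hh0t
  have hgt : z * Real.exp (D t) ≤ g t := by
    have := mul_le_mul_of_nonneg_left hh0t (le_of_lt (Real.exp_pos (D t)))
    rwa [hhdef, ← mul_assoc, ← Real.exp_add, add_neg_cancel, Real.exp_zero, one_mul,
      mul_comm (Real.exp (D t)) z] at this
  have hfinal : z * Real.exp (D t - A t) ≤ c t := by
    have h3 : Real.exp (-(A t)) * (z * Real.exp (D t)) ≤ Real.exp (-(A t)) * g t :=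
      mul_le_mul_of_nonneg_left hgt (le_of_lt (Real.exp_pos _))
    have h4 : Real.exp (-(A t)) * (z * Real.exp (D t)) = z * Real.exp (D t - A t) := by
      rw [Real.exp_sub, Real.exp_neg]; ring
    linarith [habit' t ht]
  have hint : (∫ v in (0:ℝ)..t, δ v - α v) = D t - A t := by
    rw [hDdef, hAdef]
    exact intervalIntegral.integral_sub (hδ.intervalIntegrable 0 t) (hα.intervalIntegrable 0 t)
  rw [ge_iff_le, hint]
  exact hfinal

theorem stmt0 (T : ℝ) (hT : 0 ≤ T) (α δ c : ℝ → ℝ)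
    (hα : ContinuousOn α (Set.Icc 0 T)) (hδ : ContinuousOn δ (Set.Icc 0 T))
    (hαnonneg : ∀ t ∈ Set.Icc (0:ℝ) T, 0 ≤ α t)
    (hδnonneg : ∀ t ∈ Set.Icc (0:ℝ) T, 0 ≤ δ t)
    (z : ℝ) (hz : 0 ≤ z) (hc : ContinuousOn c (Set.Icc 0 T))
    (hhabit : ∀ t ∈ Set.Icc (0:ℝ) T,
      c t ≥ z * Real.exp (-(∫ v in (0:ℝ)..t, α v)) +
        ∫ s in (0:ℝ)..t, δ s * Real.exp (-(∫ v in s..t, α v)) * c s) :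
    ∀ t ∈ Set.Icc (0:ℝ) T,
      c t ≥ z * Real.exp (∫ v in (0:ℝ)..t, δ v - α v) := by
  -- extend α, δ, c to continuous functions on ℝ via clamping
  set p : ℝ → ℝ := fun x => max 0 (min x T) with hpdef
  have hpcont : Continuous p := continuous_const.max (continuous_id.min continuous_const)
  have hpmem : ∀ x, p x ∈ Set.Icc (0:ℝ) T := by
    intro x
    constructor
    · exact le_max_left _ _
    · exact max_le hT (min_le_right _ _)
  have hpeq : ∀ x ∈ Set.Icc (0:ℝ) T, p x = x := by
    intro x hx
    rw [hpdef]
    simp only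
    rw [min_eq_left hx.2, max_eq_right hx.1]
  set αe : ℝ → ℝ := fun x => α (p x) with hαedef
  set δe : ℝ → ℝ := fun x => δ (p x) with hδedef
  set ce : ℝ → ℝ := fun x => c (p x) with hcedef
  have hαe : Continuous αe := hα.comp_continuous hpcont hpmem
  have hδe : Continuous δe := hδ.comp_continuous hpcont hpmem
  have hce : Continuous ce := hc.comp_continuous hpcont hpmem
  have hαeq : ∀ x ∈ Set.Icc (0:ℝ) T, αe x = α x := fun x hx => by
    rw [hαedef]; simp only; rw [hpeq x hx]
  have hδeq : ∀ x ∈ Set.Icc (0:ℝ) T, δe x = δ x := fun x hx => by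
    rw [hδedef]; simp only; rw [hpeq x hx]
  have hceq : ∀ x ∈ Set.Icc (0:ℝ) T, ce x = c x := fun x hx => by
    rw [hcedef]; simp only; rw [hpeq x hx]
  have hsub : ∀ s t : ℝ, s ∈ Set.Icc (0:ℝ) T → t ∈ Set.Icc (0:ℝ) T →
      Set.uIcc s t ⊆ Set.Icc 0 T := by
    intro s t hs ht
    rw [Set.uIcc_eq_union]
    exact Set.union_subset (Set.Icc_subset_Icc hs.1 ht.2) (Set.Icc_subset_Icc ht.1 hs.2)
  -- integrals of extensions agree
  have hαint : ∀ s t : ℝ, s ∈ Set.Icc (0:ℝ) T → t ∈ Set.Icc (0:ℝ) T →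
      (∫ v in s..t, αe v) = ∫ v in s..t, α v := by
    intro s t hs ht
    apply intervalIntegral.integral_congr
    intro v hv
    exact hαeq v (hsub s t hs ht hv)
  have hδsub : ∀ t ∈ Set.Icc (0:ℝ) T, ∀ v ∈ Set.uIcc (0:ℝ) t, v ∈ Set.Icc (0:ℝ) T :=
    fun t ht v hv => hsub 0 t (Set.left_mem_Icc.2 hT) ht hv
  have key := stmt0_core T hT αe δe ce hαe hδe hce
    (fun t ht => by rw [hδeq t ht]; exact hδnonneg t ht) z hz ?_
  · intro t ht
    have h1 := key t ht
    have h2 : (∫ v in (0:ℝ)..t, δe v - αe v) = ∫ v in (0:ℝ)..t, δ v - α v := by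
      apply intervalIntegral.integral_congr
      intro v hv
      show δe v - αe v = δ v - α v
      rw [hδeq v (hδsub t ht v hv), hαeq v (hδsub t ht v hv)]
    rw [h2, hceq t ht] at h1
    exact h1
  · intro t ht
    have h1 := hhabit t ht
    have h2 : (∫ v in (0:ℝ)..t, αe v) = ∫ v in (0:ℝ)..t, α v :=
      hαint 0 t (Set.left_mem_Icc.2 hT) ht
    have h3 : (∫ s in (0:ℝ)..t, δe s * Real.exp (-(∫ v in s..t, αe v)) * ce s)
        = ∫ s in (0:ℝ)..t, δ s * Real.exp (-(∫ v in s..t, α v)) * c s := by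
      apply intervalIntegral.integral_congr
      intro s hs
      have hsmem : s ∈ Set.Icc (0:ℝ) T := hδsub t ht s hs
      show δe s * Real.exp (-(∫ v in s..t, αe v)) * ce s
        = δ s * Real.exp (-(∫ v in s..t, α v)) * c s
      rw [hδeq s hsmem, hceq s hsmem, hαint s t hsmem ht]
    rw [hceq t ht, h2, h3]
    exact h1
end

section
/- Let α, δ : [0,T] → ℝ be continuous functions, z ∈ ℝ, and let c̃ : [0,T] → ℝ be continuous. Define c(t) = z·exp(∫₀ᵗ (δ(v)−α(v))dv) + c̃(t) + ∫₀ᵗ δ(s)·exp(∫ₛᵗ (δ(v)−α(v))dv)·c̃(s) ds. Then c(t) − F(c)(t) = c̃(t) for all t ∈ [0,T], where F(c)(t) = z·exp(−∫₀ᵗ α(v)dv) + ∫₀ᵗ δ(s)·exp(−∫ₛᵗ α(v)dv)·c(s) ds. -/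
open intervalIntegral

set_option maxHeartbeats 1000000 in
theorem stmt2 (T : ℝ) (hT : 0 ≤ T) (α δ ctilde c : ℝ → ℝ)
    (hα : ContinuousOn α (Set.Icc 0 T)) (hδ : ContinuousOn δ (Set.Icc 0 T))
    (hctilde : ContinuousOn ctilde (Set.Icc 0 T))
    (z : ℝ)
    (hc : ∀ t ∈ Set.Icc (0:ℝ) T,
      c t = z * Real.exp (∫ v in (0:ℝ)..t, δ v - α v) + ctilde t +
        ∫ s in (0:ℝ)..t, δ s * Real.exp (∫ v in s..t, δ v - α v) * ctilde s) :
    ∀ t ∈ Set.Icc (0:ℝ) T,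
      c t - (z * Real.exp (-(∫ v in (0:ℝ)..t, α v)) +
        ∫ s in (0:ℝ)..t, δ s * Real.exp (-(∫ v in s..t, α v)) * c s) = ctilde t := by
  have h0T : (0:ℝ) ∈ Set.Icc (0:ℝ) T := ⟨le_refl 0, hT⟩
  have hβ : ContinuousOn (fun v => δ v - α v) (Set.Icc 0 T) := hδ.sub hα
  have hint : ∀ (f : ℝ → ℝ), ContinuousOn f (Set.Icc 0 T) →
      ∀ ⦃a b : ℝ⦄, a ∈ Set.Icc (0:ℝ) T → b ∈ Set.Icc (0:ℝ) T →
        IntervalIntegrable f MeasureTheory.volume a b := by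
    intro f hf a b ha hb
    exact (hf.mono (Set.uIcc_subset_Icc ha hb)).intervalIntegrable
  have hprim : ∀ (f : ℝ → ℝ), ContinuousOn f (Set.Icc 0 T) →
      ContinuousOn (fun x => ∫ v in (0:ℝ)..x, f v) (Set.Icc 0 T) := by
    intro f hf
    have h := intervalIntegral.continuousOn_primitive_interval
      (f := f) (a := (0:ℝ)) (b := T) (μ := MeasureTheory.volume) ?_
    · rwa [Set.uIcc_of_le hT] at h
    · rw [Set.uIcc_of_le hT]; exact hf.integrableOn_Icc
  set A : ℝ → ℝ := fun s => ∫ v in (0:ℝ)..s, α v with hAdef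
  set B : ℝ → ℝ := fun s => ∫ v in (0:ℝ)..s, δ v - α v with hBdef
  have hAc : ContinuousOn A (Set.Icc 0 T) := hprim α hα
  have hBc : ContinuousOn B (Set.Icc 0 T) := hprim _ hβ
  set g : ℝ → ℝ := fun s => δ s * Real.exp (-(B s)) * ctilde s with hgdef
  have hgc : ContinuousOn g (Set.Icc 0 T) := (hδ.mul (hBc.neg.rexp)).mul hctilde
  set Q : ℝ → ℝ := fun s => z + ∫ r in (0:ℝ)..s, g r with hQdef
  have hQc : ContinuousOn Q (Set.Icc 0 T) := continuousOn_const.add (hprim g hgc)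
  -- convolution rewrite
  have hconv : ∀ s ∈ Set.Icc (0:ℝ) T,
      (∫ r in (0:ℝ)..s, δ r * Real.exp (∫ v in r..s, δ v - α v) * ctilde r)
        = Real.exp (B s) * (Q s - z) := by
    intro s hs
    have h1 : ∀ r ∈ Set.uIcc (0:ℝ) s,
        δ r * Real.exp (∫ v in r..s, δ v - α v) * ctilde r = Real.exp (B s) * g r := by
      intro r hr
      have hr' : r ∈ Set.Icc (0:ℝ) T := (Set.uIcc_subset_Icc h0T hs) hr
      have hbs : (∫ v in r..s, δ v - α v) = B s - B r :=
        (integral_interval_sub_left (hint _ hβ h0T hs) (hint _ hβ h0T hr')).symm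
      rw [hbs, Real.exp_sub, hgdef]
      simp only
      rw [Real.exp_neg, div_eq_mul_inv]
      ring
    rw [intervalIntegral.integral_congr h1, intervalIntegral.integral_const_mul, hQdef]
    simp only
    ring
  have hc' : ∀ s ∈ Set.Icc (0:ℝ) T, c s = ctilde s + Real.exp (B s) * Q s := by
    intro s hs
    rw [hc s hs, hconv s hs]
    ring
  -- FTC key identity
  have hkey : ∀ t ∈ Set.Icc (0:ℝ) T,
      (∫ s in (0:ℝ)..t, (δ s * Real.exp (A s + B s) * Q s + δ s * Real.exp (A s) * ctilde s))
        = Real.exp (A t + B t) * Q t - z := by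
    intro t ht
    have hIccsub : Set.Icc (0:ℝ) t ⊆ Set.Icc 0 T := Set.Icc_subset_Icc le_rfl ht.2
    have hcontF : ContinuousOn (fun u => Real.exp (A u + B u) * Q u) (Set.Icc 0 t) :=
      (((hAc.add hBc).rexp).mul hQc).mono hIccsub
    have hcontD : ContinuousOn
        (fun s => δ s * Real.exp (A s + B s) * Q s + δ s * Real.exp (A s) * ctilde s)
        (Set.Icc 0 T) :=
      ((hδ.mul ((hAc.add hBc).rexp)).mul hQc).add ((hδ.mul (hAc.rexp)).mul hctilde)
    have hderiv : ∀ s ∈ Set.Ioo (0:ℝ) t, HasDerivAt (fun u => Real.exp (A u + B u) * Q u)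
        (δ s * Real.exp (A s + B s) * Q s + δ s * Real.exp (A s) * ctilde s) s := by
      intro s hs
      have hsT : s ∈ Set.Ioo (0:ℝ) T := ⟨hs.1, lt_of_lt_of_le hs.2 ht.2⟩
      have hs' : s ∈ Set.Icc (0:ℝ) T := ⟨le_of_lt hsT.1, le_of_lt hsT.2⟩
      have hαA : ContinuousAt α s := hα.continuousAt (Icc_mem_nhds hsT.1 hsT.2)
      have hβA : ContinuousAt (fun v => δ v - α v) s := hβ.continuousAt (Icc_mem_nhds hsT.1 hsT.2)
      have hgA : ContinuousAt g s := hgc.continuousAt (Icc_mem_nhds hsT.1 hsT.2)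
      have hmα : StronglyMeasurableAtFilter α (nhds s) :=
        (hα.mono Set.Ioo_subset_Icc_self).stronglyMeasurableAtFilter isOpen_Ioo s hsT
      have hmβ : StronglyMeasurableAtFilter (fun v => δ v - α v) (nhds s) :=
        (hβ.mono Set.Ioo_subset_Icc_self).stronglyMeasurableAtFilter isOpen_Ioo s hsT
      have hmg : StronglyMeasurableAtFilter g (nhds s) :=
        (hgc.mono Set.Ioo_subset_Icc_self).stronglyMeasurableAtFilter isOpen_Ioo s hsT
      have hA' : HasDerivAt A (α s) s :=
        intervalIntegral.integral_hasDerivAt_right (hint _ hα h0T hs') hmα hαA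
      have hB' : HasDerivAt B (δ s - α s) s :=
        intervalIntegral.integral_hasDerivAt_right (hint _ hβ h0T hs') hmβ hβA
      have hQ' : HasDerivAt Q (g s) s :=
        (intervalIntegral.integral_hasDerivAt_right (hint _ hgc h0T hs') hmg hgA).const_add z
      have hE : HasDerivAt (fun u => Real.exp (A u + B u))
          (Real.exp (A s + B s) * (α s + (δ s - α s))) s := (hA'.add hB').exp
      have hF : HasDerivAt (fun u => Real.exp (A u + B u) * Q u) _ s := hE.mul hQ'
      convert hF using 1
      rw [hgdef]
      simp only
      rw [Real.exp_neg, Real.exp_add]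
      field_simp
      ring
    have := intervalIntegral.integral_eq_sub_of_hasDerivAt_of_le ht.1 hcontF hderiv
      (hint _ hcontD h0T ht)
    rw [this]
    have hA0 : A 0 = 0 := intervalIntegral.integral_same
    have hB0 : B 0 = 0 := intervalIntegral.integral_same
    have hQ0 : Q 0 = z := by rw [hQdef]; simp
    rw [hA0, hB0, hQ0]
    simp
  -- main computation
  intro t ht
  rw [hc t ht, hconv t ht]
  have h2 : (∫ s in (0:ℝ)..t, δ s * Real.exp (-(∫ v in s..t, α v)) * c s)
      = Real.exp (-(A t)) * (Real.exp (A t + B t) * Q t - z) := by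
    have h1 : ∀ s ∈ Set.uIcc (0:ℝ) t,
        δ s * Real.exp (-(∫ v in s..t, α v)) * c s
          = Real.exp (-(A t)) *
            (δ s * Real.exp (A s + B s) * Q s + δ s * Real.exp (A s) * ctilde s) := by
      intro s hs
      have hs' : s ∈ Set.Icc (0:ℝ) T := (Set.uIcc_subset_Icc h0T ht) hs
      have hAs : (∫ v in s..t, α v) = A t - A s :=
        (integral_interval_sub_left (hint _ hα h0T ht) (hint _ hα h0T hs')).symm
      rw [hAs, hc' s hs']
      rw [neg_sub, Real.exp_sub, Real.exp_add, Real.exp_neg]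
      field_simp
      ring
    rw [intervalIntegral.integral_congr h1, intervalIntegral.integral_const_mul, hkey t ht]
  rw [h2]
  show z * Real.exp (B t) + ctilde t + Real.exp (B t) * (Q t - z) -
      (z * Real.exp (-(A t)) + Real.exp (-(A t)) * (Real.exp (A t + B t) * Q t - z)) = ctilde t
  rw [Real.exp_neg, Real.exp_add]
  field_simp
  ring
end
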